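/- arXiv:2204.09855 — 2 statements merged into one kernel-verified Lean document; each statement's English description precedes it below -/
import Mathlib

section
/- Let ψ, f be smooth functions of (x¹,x²) with |∇̄f| < 1, let v = (v¹,v²,v³) be the null normal direction with v³ > 0 as in the graph setup, and write v̄ = (v¹,v²). Then the 2×2 matrix with entries δ_{BC} − δ_{CD} v^D (∂_B ψ)/√(1−|v̄|²) has determinant equal to √((∇̄ψ·∇̄f)² + (1+|∇̄ψ|²)(1−|∇̄f|²)) / v³, where v³ = (∇̄ψ·∇̄f + √((∇̄ψ·∇̄f)² + (1+|∇̄ψ|²)(1−|∇̄f|²)))/(1+|∇̄ψ|²). -/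
/-- In the graph setup, the `2×2` matrix with entries
`δ_{BC} − δ_{CD} v^D (∂_B ψ)/√(1−|v̄|²)` has determinant
`√((∇̄ψ·∇̄f)² + (1+|∇̄ψ|²)(1−|∇̄f|²)) / v³`. -/
theorem stmt_4 (ψ f : EuclideanSpace ℝ (Fin 2) → ℝ)
    (hψ : ContDiff ℝ (⊤ : ℕ∞) ψ) (hf : ContDiff ℝ (⊤ : ℕ∞) f)
    (x : EuclideanSpace ℝ (Fin 2))
    (f1 f2 ψ1 ψ2 : ℝ)
    (hf1 : f1 = fderiv ℝ f x (EuclideanSpace.single 0 1))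
    (hf2 : f2 = fderiv ℝ f x (EuclideanSpace.single 1 1))
    (hψ1 : ψ1 = fderiv ℝ ψ x (EuclideanSpace.single 0 1))
    (hψ2 : ψ2 = fderiv ℝ ψ x (EuclideanSpace.single 1 1))
    (hgrad : f1 ^ 2 + f2 ^ 2 < 1)
    (v3 v1 v2 : ℝ)
    (hv3 : v3 = ((ψ1 * f1 + ψ2 * f2) +
        Real.sqrt ((ψ1 * f1 + ψ2 * f2) ^ 2 +
          (1 + (ψ1 ^ 2 + ψ2 ^ 2)) * (1 - (f1 ^ 2 + f2 ^ 2)))) /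
        (1 + (ψ1 ^ 2 + ψ2 ^ 2)))
    (hv1 : v1 = f1 - v3 * ψ1) (hv2 : v2 = f2 - v3 * ψ2) :
    Matrix.det
      (!![1 - v1 * ψ1 / Real.sqrt (1 - (v1 ^ 2 + v2 ^ 2)),
            -(v2 * ψ1) / Real.sqrt (1 - (v1 ^ 2 + v2 ^ 2));
          -(v1 * ψ2) / Real.sqrt (1 - (v1 ^ 2 + v2 ^ 2)),
            1 - v2 * ψ2 / Real.sqrt (1 - (v1 ^ 2 + v2 ^ 2))]) =
      Real.sqrt ((ψ1 * f1 + ψ2 * f2) ^ 2 +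
        (1 + (ψ1 ^ 2 + ψ2 ^ 2)) * (1 - (f1 ^ 2 + f2 ^ 2))) / v3 := by
  set S := ψ1 * f1 + ψ2 * f2 with hS
  set Q := 1 + (ψ1 ^ 2 + ψ2 ^ 2) with hQdef
  set R := Real.sqrt (S ^ 2 + Q * (1 - (f1 ^ 2 + f2 ^ 2))) with hRdef
  have hQ : (0:ℝ) < Q := by rw [hQdef]; positivity
  have hDpos : 0 < S ^ 2 + Q * (1 - (f1 ^ 2 + f2 ^ 2)) := by nlinarith
  have hR2 : R ^ 2 = S ^ 2 + Q * (1 - (f1 ^ 2 + f2 ^ 2)) := Real.sq_sqrt hDpos.le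
  have hRpos : 0 < R := Real.sqrt_pos.mpr hDpos
  have hSR : 0 < S + R := by nlinarith
  have hv3pos : 0 < v3 := by rw [hv3]; positivity
  have hv3Q : v3 * Q = S + R := by rw [hv3]; field_simp
  have hquad : Q * v3 ^ 2 = 2 * S * v3 + (1 - (f1 ^ 2 + f2 ^ 2)) :=
    mul_left_cancel₀ hQ.ne' (by linear_combination (v3 * Q - S + R) * hv3Q + hR2)
  rw [hQdef, hS] at hquad hv3Q
  have hsum : 1 - (v1 ^ 2 + v2 ^ 2) = v3 ^ 2 := by
    subst hv1 hv2
    linear_combination -hquad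
  have hsqrt : Real.sqrt (1 - (v1 ^ 2 + v2 ^ 2)) = v3 := by
    rw [hsum, Real.sqrt_sq hv3pos.le]
  rw [Matrix.det_fin_two_of, hsqrt]
  have hv3ne : v3 ≠ 0 := hv3pos.ne'
  field_simp
  subst hv1 hv2
  linear_combination v3 * hv3Q
end

section
/- Let r, k_{θθ}, k_{ρρ}, ψ₀, ψ₁ be smooth functions of ρ solving the spherically symmetric constraint equations −r'' + (1−(r')²)/(2r) + k_{ρρ}k_{θθ}/r + k_{θθ}²/(2r³) = (r/4)((ψ₀')² + ψ₁²) and k_{ρρ}r' − (k_{θθ}/r)' = (r/2)ψ₁ψ₀'. Define the Hawking mass m = r/2 + k_{θθ}²/(2r) − r(r')²/2. Then m' = (r²/8)(r' + k_{θθ}/r)(ψ₁ − ψ₀')² + (r²/8)(r' − k_{θθ}/r)(ψ₁ + ψ₀')². In particular, if |k_{θθ}/r| < r' pointwise and m(0) = 0, then m(ρ) ≥ 0 for all ρ ≥ 0. -/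
open scoped ContDiff

/-- Mass monotonicity identity for the spherically symmetric Einstein–scalar field
constraints: if `r, k_{θθ}, k_{ρρ}, ψ₀, ψ₁` solve the two constraint equations and the
Hawking mass is `m = r/2 + k_{θθ}²/(2r) − r(r')²/2`, then
`m' = (r²/8)(r' + k_{θθ}/r)(ψ₁ − ψ₀')² + (r²/8)(r' − k_{θθ}/r)(ψ₁ + ψ₀')²`.
In particular, if `|k_{θθ}/r| < r'` pointwise and `m(0) = 0`, then `m ≥ 0` on `[0,∞)`. -/
theorem stmt_15 (r kθθ kρρ ψ0 ψ1 : ℝ → ℝ)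
    (hrS : ContDiff ℝ (⊤ : ℕ∞) r) (hkθθS : ContDiff ℝ (⊤ : ℕ∞) kθθ) (hkρρS : ContDiff ℝ (⊤ : ℕ∞) kρρ)
    (hψ0S : ContDiff ℝ (⊤ : ℕ∞) ψ0) (hψ1S : ContDiff ℝ (⊤ : ℕ∞) ψ1)
    (hrpos : ∀ ρ : ℝ, 0 < r ρ)
    (hC1 : ∀ ρ : ℝ,
      -(deriv (deriv r) ρ) + (1 - (deriv r ρ) ^ 2) / (2 * r ρ)
          + kρρ ρ * kθθ ρ / r ρ + (kθθ ρ) ^ 2 / (2 * (r ρ) ^ 3) =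
        r ρ / 4 * ((deriv ψ0 ρ) ^ 2 + (ψ1 ρ) ^ 2))
    (hC2 : ∀ ρ : ℝ,
      kρρ ρ * deriv r ρ - deriv (fun s => kθθ s / r s) ρ =
        r ρ / 2 * (ψ1 ρ * deriv ψ0 ρ))
    (m : ℝ → ℝ)
    (hm : ∀ ρ, m ρ = r ρ / 2 + (kθθ ρ) ^ 2 / (2 * r ρ) - r ρ * (deriv r ρ) ^ 2 / 2) :
    (∀ ρ : ℝ, deriv m ρ =
        (r ρ) ^ 2 / 8 * (deriv r ρ + kθθ ρ / r ρ) * (ψ1 ρ - deriv ψ0 ρ) ^ 2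
          + (r ρ) ^ 2 / 8 * (deriv r ρ - kθθ ρ / r ρ) * (ψ1 ρ + deriv ψ0 ρ) ^ 2) ∧
      ((∀ ρ : ℝ, |kθθ ρ / r ρ| < deriv r ρ) → m 0 = 0 →
        ∀ ρ : ℝ, 0 ≤ ρ → 0 ≤ m ρ) := by
  have hone : (1 : WithTop ℕ∞) ≤ ∞ := by exact_mod_cast le_top
  have hrS' : ContDiff ℝ ∞ (deriv r) := (contDiff_infty_iff_deriv.mp (hrS.of_le (by simp))).2
  have hmeq : m = fun s => r s / 2 + (kθθ s) ^ 2 / (2 * r s) - r s * (deriv r s) ^ 2 / 2 :=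
    funext hm
  have key : ∀ ρ : ℝ, deriv m ρ =
      (r ρ) ^ 2 / 8 * (deriv r ρ + kθθ ρ / r ρ) * (ψ1 ρ - deriv ψ0 ρ) ^ 2
        + (r ρ) ^ 2 / 8 * (deriv r ρ - kθθ ρ / r ρ) * (ψ1 ρ + deriv ψ0 ρ) ^ 2 := by
    intro ρ
    have hR : r ρ ≠ 0 := (hrpos ρ).ne'
    have hr : HasDerivAt r (deriv r ρ) ρ := (hrS.differentiable (by simp) ρ).hasDerivAt
    have hdr : HasDerivAt (deriv r) (deriv (deriv r) ρ) ρ :=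
      (hrS'.differentiable (by simp) ρ).hasDerivAt
    have hk : HasDerivAt kθθ (deriv kθθ ρ) ρ := (hkθθS.differentiable (by simp) ρ).hasDerivAt
    have hkr : HasDerivAt (fun s => kθθ s / r s)
        ((deriv kθθ ρ * r ρ - kθθ ρ * deriv r ρ) / (r ρ) ^ 2) ρ := hk.div hr hR
    have hc2 : kρρ ρ * deriv r ρ -
        (deriv kθθ ρ * r ρ - kθθ ρ * deriv r ρ) / (r ρ) ^ 2 =
        r ρ / 2 * (ψ1 ρ * deriv ψ0 ρ) := by
      rw [← hkr.deriv]; exact hC2 ρ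
    have hK1 : deriv kθθ ρ = r ρ * kρρ ρ * deriv r ρ
        - (r ρ) ^ 2 / 2 * (ψ1 ρ * deriv ψ0 ρ) + kθθ ρ * deriv r ρ / r ρ := by
      field_simp at hc2 ⊢
      nlinarith [hc2, sq_nonneg (r ρ)]
    have hR2 : deriv (deriv r) ρ = (1 - (deriv r ρ) ^ 2) / (2 * r ρ)
        + kρρ ρ * kθθ ρ / r ρ + (kθθ ρ) ^ 2 / (2 * (r ρ) ^ 3)
        - r ρ / 4 * ((deriv ψ0 ρ) ^ 2 + (ψ1 ρ) ^ 2) := by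
      linarith [hC1 ρ]
    have hmd : HasDerivAt m
        (deriv r ρ / 2
          + ((2 : ℕ) * kθθ ρ ^ (2 - 1) * deriv kθθ ρ * (2 * r ρ)
              - kθθ ρ ^ 2 * (2 * deriv r ρ)) / (2 * r ρ) ^ 2
          - (deriv r ρ * (deriv r ρ) ^ 2
              + r ρ * ((2 : ℕ) * deriv r ρ ^ (2 - 1) * deriv (deriv r) ρ)) / 2) ρ := by
      rw [hmeq]
      exact ((hr.div_const 2).add ((hk.pow 2).div (hr.const_mul 2)
        (by positivity))).sub ((hr.mul (hdr.pow 2)).div_const 2)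
    rw [hmd.deriv, hK1, hR2]
    field_simp
    ring
  refine ⟨key, ?_⟩
  intro hlt hm0 ρ hρ
  have hdiff : Differentiable ℝ m := by
    rw [hmeq]
    have h1 : Differentiable ℝ r := hrS.differentiable (by simp)
    have h2 : Differentiable ℝ kθθ := hkθθS.differentiable (by simp)
    have h3 : Differentiable ℝ (deriv r) := hrS'.differentiable (by simp)
    exact ((h1.div_const 2).add ((h2.pow 2).div (h1.const_mul 2)
      (fun x => by have := hrpos x; positivity))).sub ((h1.mul (h3.pow 2)).div_const 2)
  have hmono : Monotone m := by
    apply monotone_of_deriv_nonneg hdiff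
    intro x
    rw [key x]
    obtain ⟨h1, h2⟩ := abs_lt.mp (hlt x)
    have := hrpos x
    apply add_nonneg
    · exact mul_nonneg (mul_nonneg (by positivity) (by linarith)) (sq_nonneg _)
    · exact mul_nonneg (mul_nonneg (by positivity) (by linarith)) (sq_nonneg _)
  have := hmono hρ
  linarith
end
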